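/- Let Z, Z' : C(A) → T be weak stability conditions on A, v ∈ C(A), and suppose Z' dominates Z with respect to v (i.e. for v₁, v₂ ∈ C_{≤v}(A), Z(v₁) ⪰ Z(v₂) implies Z'(v₁) ⪰ Z'(v₂)). Then an object E ∈ A with [E] = v is Z'-semistable if and only if the Harder–Narasimhan factors F₁, …, F_l of E with respect to Z satisfy Z'(F₁) = Z'(F₂) = ⋯ = Z'(F_l). -/

import Mathlib

open CategoryTheory CategoryTheory.Limits

universe v u

/-- The `i`-th subquotient `E_{i+1}/E_i` of a strictly increasing filtration of
subobjects of an object of an abelian category. -/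
noncomputable def hnSubquot {C : Type u} [Category.{v} C] [Abelian C] {E : C} {n : ℕ}
    (F : Fin (n + 1) → Subobject E) (hF : StrictMono F) (i : Fin n) : C :=
  cokernel (Subobject.ofLE _ _ (hF (Fin.castSucc_lt_succ (i := i))).le)

set_option linter.unusedSectionVars false

section Aux

variable {C : Type u} [Category.{v} C] [Abelian C]
variable {N : Type*} [AddCommGroup N] {T : Type*} [LinearOrder T]

lemma auxIsZeroOfMono {X Y : C} (u : Y ⟶ X) [Mono u] (h : IsZero X) : IsZero Y :=
  (IsZero.iff_id_eq_zero Y).mpr (by rw [← cancel_mono u, h.eq_zero_of_tgt u]; simp)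

lemma auxIsZeroOfEpi {X Y : C} (p : X ⟶ Y) [Epi p] (h : IsZero X) : IsZero Y :=
  (IsZero.iff_id_eq_zero Y).mpr (by rw [← cancel_epi p, h.eq_zero_of_src p]; simp)

lemma auxIsZeroOfMonoZero {X Y : C} (u : Y ⟶ X) [Mono u] (h : u = 0) : IsZero Y :=
  (IsZero.iff_id_eq_zero Y).mpr (by rw [← cancel_mono u, h]; simp)

lemma auxIsZeroOfEpiZero {X Y : C} (p : X ⟶ Y) [Epi p] (h : p = 0) : IsZero Y :=
  (IsZero.iff_id_eq_zero Y).mpr (by rw [← cancel_epi p, h]; simp)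

lemma auxEqBotZero {X : C} {S : Subobject X} (h : S = ⊥) : IsZero (S : C) := by
  subst h
  exact (isZero_zero C).of_iso Subobject.botCoeIsoZero

lemma auxBotEqTopZero {X : C} (h : (⊥ : Subobject X) = ⊤) : IsZero X :=
  (auxEqBotZero h.symm).of_iso (asIso (⊤ : Subobject X).arrow).symm

lemma auxNeBotNonzero {X : C} {S : Subobject X} (h : S ≠ ⊥) : ¬ IsZero (S : C) := fun hz =>
  h (by rw [← Subobject.mk_arrow S]; exact Subobject.mk_eq_bot_iff_zero.mpr (hz.eq_zero_of_src _))

lemma auxNeTopCoker {X : C} {S : Subobject X} (h : S ≠ ⊤) : ¬ IsZero (cokernel S.arrow) :=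
  fun hz => by
    haveI := Preadditive.epi_of_isZero_cokernel _ hz
    haveI := isIso_of_mono_of_epi S.arrow
    exact h ((Subobject.isIso_arrow_iff_eq_top S).mp ‹_›)

lemma auxSubquotNonzero {E : C} {n : ℕ} (F : Fin (n + 1) → Subobject E) (hF : StrictMono F)
    (i : Fin n) : ¬ IsZero (hnSubquot F hF i) := fun hz => by
  haveI := Preadditive.epi_of_isZero_cokernel
    (Subobject.ofLE _ _ (hF (Fin.castSucc_lt_succ (i := i))).le) hz
  haveI := isIso_of_mono_of_epi (Subobject.ofLE _ _ (hF (Fin.castSucc_lt_succ (i := i))).le)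
  have hle : F i.succ ≤ F i.castSucc := Subobject.le_of_comm
    (inv (Subobject.ofLE _ _ (hF (Fin.castSucc_lt_succ (i := i))).le))
    (by rw [← Subobject.ofLE_arrow (hF (Fin.castSucc_lt_succ (i := i))).le, IsIso.inv_hom_id_assoc])
  exact absurd hle (hF (Fin.castSucc_lt_succ (i := i))).not_ge

noncomputable def auxCokerKernelIso {X Y : C} (p : X ⟶ Y) [Epi p] : cokernel (kernel.ι p) ≅ Y :=
  (cokernelIsCokernel (kernel.ι p)).coconePointUniqueUpToIso
    (Abelian.epiIsCokernelOfKernel (KernelFork.ofι (kernel.ι p) (kernel.condition p)) (kernelIsKernel p))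

noncomputable def auxTopQuotIso {E : C} {m : ℕ} (F : Fin (m + 2) → Subobject E)
    (hF : StrictMono F) (htop : F (Fin.last (m + 1)) = ⊤) :
    cokernel (F (Fin.castSucc (Fin.last m))).arrow ≅ hnSubquot F hF (Fin.last m) := by
  haveI : IsIso (F ((Fin.last m).succ)).arrow := by
    rw [show F ((Fin.last m).succ) = ⊤ from htop]
    infer_instance
  exact cokernelIsoOfEq
      (Subobject.ofLE_arrow ((hF (Fin.castSucc_lt_succ (i := Fin.last m))).le)).symm ≪≫
    cokernelCompIsIso _ _

section seesaw

variable {W : N → T} {CA : Set N}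

lemma auxSeesawLe
    (hw : ∀ a b : N, a ∈ CA → b ∈ CA →
      (W a ≤ W (a + b) ∧ W (a + b) ≤ W b) ∨ (W b ≤ W (a + b) ∧ W (a + b) ≤ W a))
    {a b : N} (ha : a ∈ CA) (hb : b ∈ CA) (h : W a ≤ W b) :
    W a ≤ W (a + b) ∧ W (a + b) ≤ W b := by
  rcases hw a b ha hb with h' | ⟨h1, h2⟩
  · exact h'
  · exact ⟨h.trans h1, h2.trans h⟩

lemma auxSeesawMax
    (hw : ∀ a b : N, a ∈ CA → b ∈ CA →
      (W a ≤ W (a + b) ∧ W (a + b) ≤ W b) ∨ (W b ≤ W (a + b) ∧ W (a + b) ≤ W a))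
    {a b : N} (ha : a ∈ CA) (hb : b ∈ CA) : W (a + b) ≤ max (W a) (W b) := by
  rcases hw a b ha hb with ⟨_, h2⟩ | ⟨_, h2⟩
  · exact h2.trans (le_max_right _ _)
  · exact h2.trans (le_max_left _ _)

lemma auxSeesawMin
    (hw : ∀ a b : N, a ∈ CA → b ∈ CA →
      (W a ≤ W (a + b) ∧ W (a + b) ≤ W b) ∨ (W b ≤ W (a + b) ∧ W (a + b) ≤ W a))
    {a b : N} (ha : a ∈ CA) (hb : b ∈ CA) : min (W a) (W b) ≤ W (a + b) := by
  rcases hw a b ha hb with ⟨h1, _⟩ | ⟨h1, _⟩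
  · exact (min_le_left _ _).trans h1
  · exact (min_le_right _ _).trans h1

end seesaw

section cl

variable (cl : C → N)
variable (hcliso : ∀ X Y : C, (X ≅ Y) → cl X = cl Y)
variable (hcladd : ∀ (X : C) (S : Subobject X), cl X = cl (S : C) + cl (cokernel S.arrow))

include hcliso hcladd

lemma auxClZero {X : C} (h : IsZero X) : cl X = 0 := by
  have h1 := hcladd X ⊤
  have h2 : cl ((⊤ : Subobject X) : C) = cl X := hcliso _ _ (asIso (⊤ : Subobject X).arrow)
  have h3 : IsZero (cokernel (⊤ : Subobject X).arrow) :=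
    (isZero_zero C).of_iso (cokernel.ofEpi _)
  have h4 : cl (cokernel (⊤ : Subobject X).arrow) = 0 := by
    have := h1
    rw [h2] at this
    exact (left_eq_add.mp this)
  have h5 : cl X = cl (cokernel (⊤ : Subobject X).arrow) := hcliso _ _ (h.iso h3)
  rw [h5, h4]

lemma auxClSeq {X Y : C} (f : X ⟶ Y) [Mono f] : cl Y = cl X + cl (cokernel f) := by
  have h1 := hcladd Y (Subobject.mk f)
  have h2 : cl ((Subobject.mk f : Subobject Y) : C) = cl X := hcliso _ _ (Subobject.underlyingIso f)
  have h3 : cl (cokernel (Subobject.mk f).arrow) = cl (cokernel f) := hcliso _ _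
    (cokernelIsoOfEq (Subobject.underlyingIso_hom_comp_eq_mk f).symm ≪≫ cokernelEpiComp _ _)
  rw [h1, h2, h3]

lemma auxClBiprod (X Y : C) : cl (X ⊞ Y) = cl X + cl Y := by
  rw [auxClSeq cl hcliso hcladd (biprod.inl : X ⟶ X ⊞ Y)]
  have : cl (cokernel (biprod.inl : X ⟶ X ⊞ Y)) = cl Y := hcliso _ _ cokernelBiprodInlIso
  rw [this]

lemma auxClSrc {X Y : C} (f : X ⟶ Y) : cl X = cl (kernel f) + cl (Abelian.image f) := by
  have h1 := auxClSeq cl hcliso hcladd (kernel.ι f)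
  have h2 : cl (cokernel (kernel.ι f)) = cl (Abelian.image f) :=
    hcliso _ _ (Abelian.coimageIsoImage f)
  rw [h1, h2]

lemma auxClTgt {X Y : C} (f : X ⟶ Y) : cl Y = cl (Abelian.image f) + cl (cokernel f) := by
  have h1 := auxClSeq cl hcliso hcladd (Abelian.image.ι f)
  have h2 : cl (cokernel (Abelian.image.ι f)) = cl (cokernel f) := hcliso _ _
    ((cokernelIsoOfEq (Abelian.image.fac f).symm ≪≫ cokernelEpiComp _ _).symm)
  rw [h1, h2]

lemma auxClStep {E : C} {n : ℕ} (F : Fin (n + 1) → Subobject E) (hF : StrictMono F) (i : Fin n) :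
    cl ((F i.succ : Subobject E) : C)
      = cl ((F i.castSucc : Subobject E) : C) + cl (hnSubquot F hF i) :=
  auxClSeq cl hcliso hcladd (Subobject.ofLE _ _ (hF (Fin.castSucc_lt_succ (i := i))).le)

end cl

end Aux
section Bounds

variable {C : Type u} [Category.{v} C] [Abelian C]
variable {N : Type*} [AddCommGroup N] {T : Type*} [LinearOrder T]

lemma auxMonoBound (cl : C → N)
    (hcliso : ∀ X Y : C, (X ≅ Y) → cl X = cl Y)
    (hcladd : ∀ (X : C) (S : Subobject X), cl X = cl (S : C) + cl (cokernel S.arrow))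
    (Z : N → T) {CA : Set N} (hCA : CA = {w | ∃ X : C, ¬ IsZero X ∧ cl X = w})
    (hseesawZ : ∀ a b : N, a ∈ CA → b ∈ CA →
      (Z a ≤ Z (a + b) ∧ Z (a + b) ≤ Z b) ∨ (Z b ≤ Z (a + b) ∧ Z (a + b) ≤ Z a))
    {X B : C}
    (hss : ∀ S : Subobject X, S ≠ ⊥ → S ≠ ⊤ → Z (cl (S : C)) ≤ Z (cl (cokernel S.arrow)))
    (m : B ⟶ X) [Mono m] (hB : ¬ IsZero B) : Z (cl B) ≤ Z (cl X) := by
  by_cases hi : IsIso m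
  · exact le_of_eq (congrArg Z (hcliso _ _ (asIso m)))
  · have hbot : Subobject.mk m ≠ ⊥ := fun h =>
      hB (auxIsZeroOfMonoZero m (Subobject.mk_eq_bot_iff_zero.mp h))
    have htop : Subobject.mk m ≠ ⊤ := fun h => hi ((Subobject.isIso_iff_mk_eq_top m).mpr h)
    have hZ := hss _ hbot htop
    rw [hcliso _ _ (Subobject.underlyingIso m)] at hZ
    have h3 : cl (cokernel (Subobject.mk m).arrow) = cl (cokernel m) := hcliso _ _
      (cokernelIsoOfEq (Subobject.underlyingIso_hom_comp_eq_mk m).symm ≪≫ cokernelEpiComp _ _)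
    rw [h3] at hZ
    have hcne : ¬ IsZero (cokernel m) := fun hz => hi (by
      haveI := Preadditive.epi_of_isZero_cokernel m hz
      exact isIso_of_mono_of_epi m)
    have hBCA : cl B ∈ CA := by rw [hCA]; exact ⟨B, hB, rfl⟩
    have hcCA : cl (cokernel m) ∈ CA := by rw [hCA]; exact ⟨_, hcne, rfl⟩
    have hle := auxSeesawLe hseesawZ hBCA hcCA hZ
    rw [auxClSeq cl hcliso hcladd m]
    exact hle.1

lemma auxEpiBound (cl : C → N)
    (hcliso : ∀ X Y : C, (X ≅ Y) → cl X = cl Y)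
    (hcladd : ∀ (X : C) (S : Subobject X), cl X = cl (S : C) + cl (cokernel S.arrow))
    (Z : N → T) {CA : Set N} (hCA : CA = {w | ∃ X : C, ¬ IsZero X ∧ cl X = w})
    (hseesawZ : ∀ a b : N, a ∈ CA → b ∈ CA →
      (Z a ≤ Z (a + b) ∧ Z (a + b) ≤ Z b) ∨ (Z b ≤ Z (a + b) ∧ Z (a + b) ≤ Z a))
    {X B : C}
    (hss : ∀ S : Subobject X, S ≠ ⊥ → S ≠ ⊤ → Z (cl (S : C)) ≤ Z (cl (cokernel S.arrow)))
    (p : X ⟶ B) [Epi p] (hB : ¬ IsZero B) : Z (cl X) ≤ Z (cl B) := by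
  by_cases hi : IsIso p
  · exact le_of_eq (congrArg Z (hcliso _ _ (asIso p)))
  · have hbot : Subobject.mk (kernel.ι p) ≠ ⊥ := fun h => by
      have h0 : kernel.ι p = 0 := Subobject.mk_eq_bot_iff_zero.mp h
      haveI := Preadditive.mono_of_isZero_kernel p (auxIsZeroOfMonoZero (kernel.ι p) h0)
      exact hi (isIso_of_mono_of_epi p)
    have htop : Subobject.mk (kernel.ι p) ≠ ⊤ := fun h => by
      haveI : IsIso (kernel.ι p) := (Subobject.isIso_iff_mk_eq_top _).mpr h
      exact hB (auxIsZeroOfEpiZero p (zero_of_epi_comp (kernel.ι p) (kernel.condition p)))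
    have hZ := hss _ hbot htop
    rw [hcliso _ _ (Subobject.underlyingIso (kernel.ι p))] at hZ
    have h3 : cl (cokernel (Subobject.mk (kernel.ι p)).arrow) = cl B := hcliso _ _
      ((cokernelIsoOfEq (Subobject.underlyingIso_hom_comp_eq_mk (kernel.ι p)).symm ≪≫
        cokernelEpiComp _ _) ≪≫ auxCokerKernelIso p)
    rw [h3] at hZ
    have hkne : ¬ IsZero (kernel p) := fun hz => by
      haveI := Preadditive.mono_of_isZero_kernel p hz
      exact hi (isIso_of_mono_of_epi p)
    have hkCA : cl (kernel p) ∈ CA := by rw [hCA]; exact ⟨_, hkne, rfl⟩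
    have hBCA : cl B ∈ CA := by rw [hCA]; exact ⟨B, hB, rfl⟩
    have hle := auxSeesawLe hseesawZ hkCA hBCA hZ
    have hXeq : cl X = cl (kernel p) + cl B := by
      rw [auxClSeq cl hcliso hcladd (kernel.ι p), hcliso _ _ (auxCokerKernelIso p)]
    rw [hXeq]
    exact hle.2

end Bounds

section Restriction

variable {C : Type u} [Category.{v} C] [Abelian C]

/-- The restriction of a filtration to its second-to-top term. -/
noncomputable def resFil {X : C} {m : ℕ} (F : Fin (m + 2) → Subobject X) (hF : Monotone F)
    (i : Fin (m + 1)) : Subobject ((F (Fin.castSucc (Fin.last m)) : Subobject X) : C) :=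
  Subobject.mk (Subobject.ofLE (F i.castSucc) (F (Fin.castSucc (Fin.last m)))
    (hF (Fin.castSucc_le_castSucc_iff.mpr (Fin.le_last i))))

lemma resFil_le {X : C} {m : ℕ} (F : Fin (m + 2) → Subobject X) (hF : Monotone F)
    {i j : Fin (m + 1)} (h : F i.castSucc ≤ F j.castSucc) :
    resFil F hF i ≤ resFil F hF j :=
  Subobject.mk_le_mk_of_comm (Subobject.ofLE _ _ h) (Subobject.ofLE_comp_ofLE _ _ _ _ _)

lemma resFil_le_rev {X : C} {m : ℕ} (F : Fin (m + 2) → Subobject X) (hF : Monotone F)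
    {i j : Fin (m + 1)} (h : resFil F hF i ≤ resFil F hF j) : F i.castSucc ≤ F j.castSucc := by
  refine Subobject.le_of_comm (Subobject.ofMkLEMk _ _ h) ?_
  rw [← Subobject.ofLE_arrow (hF (Fin.castSucc_le_castSucc_iff.mpr (Fin.le_last j))),
    ← Category.assoc, Subobject.ofMkLEMk_comp (h := h), Subobject.ofLE_arrow]

lemma resFil_strictMono {X : C} {m : ℕ} (F : Fin (m + 2) → Subobject X) (hFm : StrictMono F) :
    StrictMono (resFil F hFm.monotone) :=
  Monotone.strictMono_of_injective
    (fun _ _ hij => resFil_le _ _ (hFm.monotone (Fin.castSucc_le_castSucc_iff.mpr hij)))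
    (fun i j hij => by
      have h1 := resFil_le_rev F hFm.monotone hij.le
      have h2 := resFil_le_rev F hFm.monotone hij.ge
      exact Fin.castSucc_injective _ (hFm.injective (le_antisymm h1 h2)))

lemma resFil_zero {X : C} {m : ℕ} (F : Fin (m + 2) → Subobject X) (hF : Monotone F)
    (h0 : F 0 = ⊥) : resFil F hF 0 = ⊥ := by
  apply Subobject.mk_eq_bot_iff_zero.mpr
  exact (auxEqBotZero (show F (Fin.castSucc (0 : Fin (m + 1))) = ⊥ by
    rw [Fin.castSucc_zero, h0])).eq_zero_of_src _

lemma resFil_last {X : C} {m : ℕ} (F : Fin (m + 2) → Subobject X) (hF : Monotone F) :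
    resFil F hF (Fin.last m) = ⊤ := by
  unfold resFil
  refine le_antisymm le_top (Subobject.le_mk_of_comm (⊤ : Subobject _).arrow ?_)
  rw [Subobject.ofLE_refl, Category.comp_id]

noncomputable def auxCokerMkIso {X : C} (P Q A : Subobject X) (hPQ : P ≤ Q) (hQA : Q ≤ A)
    (hmk : Subobject.mk (Subobject.ofLE P A (hPQ.trans hQA)) ≤
      Subobject.mk (Subobject.ofLE Q A hQA)) :
    cokernel (Subobject.ofLE _ _ hmk) ≅ cokernel (Subobject.ofLE P Q hPQ) := by
  have key : (Subobject.underlyingIso (Subobject.ofLE P A (hPQ.trans hQA))).inv ≫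
      Subobject.ofLE _ _ hmk ≫ (Subobject.underlyingIso (Subobject.ofLE Q A hQA)).hom =
      Subobject.ofLE P Q hPQ := by
    rw [← cancel_mono (Subobject.ofLE Q A hQA)]
    simp only [Category.assoc, Subobject.underlyingIso_hom_comp_eq_mk,
      Subobject.ofLE_arrow, Subobject.underlyingIso_arrow, Subobject.ofLE_comp_ofLE]
  exact (cokernelIsoOfEq key.symm ≪≫ cokernelEpiComp _ _ ≪≫ cokernelCompIsIso _ _).symm

noncomputable def resFilSubquotIso {X : C} {m : ℕ} (F : Fin (m + 2) → Subobject X)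
    (hFm : StrictMono F) (i : Fin m) :
    hnSubquot (resFil F hFm.monotone) (resFil_strictMono F hFm) i ≅
      hnSubquot F hFm i.castSucc :=
  auxCokerMkIso (F i.castSucc.castSucc) (F i.castSucc.succ) (F (Fin.castSucc (Fin.last m)))
    (hFm (Fin.castSucc_lt_succ (i := i.castSucc))).le
    (hFm.monotone (by
      rw [Fin.succ_castSucc]
      exact Fin.castSucc_le_castSucc_iff.mpr (Fin.le_last i.succ)))
    ((resFil_strictMono F hFm) (Fin.castSucc_lt_succ (i := i))).le

end Restriction
section MainInduction

variable {C : Type u} [Category.{v} C] [Abelian C]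
variable {N : Type*} [AddCommGroup N] {T : Type*} [LinearOrder T]

lemma auxSubBound (cl : C → N)
    (hcliso : ∀ X Y : C, (X ≅ Y) → cl X = cl Y)
    (hcladd : ∀ (X : C) (S : Subobject X), cl X = cl (S : C) + cl (cokernel S.arrow))
    (hclne : ∀ X : C, ¬ IsZero X → cl X ≠ 0)
    (Z Z' : N → T) (CA : Set N) (hCA : CA = {w | ∃ X : C, ¬ IsZero X ∧ cl X = w})
    (Clev : Set N)
    (hseesawZ' : ∀ a b : N, a ∈ CA → b ∈ CA →
      (Z' a ≤ Z' (a + b) ∧ Z' (a + b) ≤ Z' b) ∨ (Z' b ≤ Z' (a + b) ∧ Z' (a + b) ≤ Z' a))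
    (hdom : ∀ v₁ v₂ : N, v₁ ∈ Clev → v₂ ∈ Clev → Z v₂ ≤ Z v₁ → Z' v₂ ≤ Z' v₁)
    (t : T) :
    ∀ (n : ℕ) (X : C) (F : Fin (n + 1) → Subobject X) (hFm : StrictMono F),
      F 0 = ⊥ → F (Fin.last n) = ⊤ →
      (∀ (i : Fin n) (B : C) (m' : B ⟶ hnSubquot F hFm i), Mono m' → ¬ IsZero B →
        Z (cl B) ≤ Z (cl (hnSubquot F hFm i))) →
      (∀ (i : Fin n) (B : C) (p' : hnSubquot F hFm i ⟶ B), Epi p' → ¬ IsZero B →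
        Z (cl (hnSubquot F hFm i)) ≤ Z (cl B)) →
      (∀ i : Fin n, Z' (cl (hnSubquot F hFm i)) = t) →
      (∀ D D' : C, ¬ IsZero D → ¬ IsZero D' → cl D + cl D' = cl X → cl D ∈ Clev) →
      ∀ (Y : C) (u : Y ⟶ X), Mono u → ¬ IsZero Y → Z' (cl Y) ≤ t := by
  intro n
  induction n with
  | zero =>
    intro X F hFm h0 htop _ _ _ _ Y u hu hY
    haveI := hu
    refine absurd (auxIsZeroOfMono u (auxBotEqTopZero ?_)) hY
    rw [← h0, ← htop, Fin.last_zero]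
  | succ m IH =>
    intro X F hFm h0 htop hssB hssQ hfac henv Y u hu hY
    haveI := hu
    set A : Subobject X := F (Fin.castSucc (Fin.last m)) with hA
    have eTop : cokernel A.arrow ≅ hnSubquot F hFm (Fin.last m) := auxTopQuotIso F hFm htop
    have hGne : ¬ IsZero (cokernel A.arrow) := fun hz =>
      auxSubquotNonzero F hFm (Fin.last m) (hz.of_iso eTop.symm)
    have hclXA : cl X = cl (A : C) + cl (cokernel A.arrow) := hcladd X A
    have hfacG : Z' (cl (cokernel A.arrow)) = t := by
      rw [hcliso _ _ eTop]; exact hfac (Fin.last m)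
    by_cases hm0 : m = 0
    · subst hm0
      have hAbot : A = ⊥ := h0
      have hAzero : IsZero (A : C) := auxEqBotZero hAbot
      have hclA : cl (A : C) = 0 := auxClZero cl hcliso hcladd hAzero
      have hXG : cl X = cl (cokernel A.arrow) := by rw [hclXA, hclA, zero_add]
      have isoXG : X ≅ cokernel A.arrow :=
        (cokernelIsoOfEq (hAzero.eq_zero_of_src A.arrow) ≪≫ cokernelZeroIsoTarget).symm
      by_cases hcu : IsZero (cokernel u)
      · have hYX : cl Y = cl X := by
          rw [auxClSeq cl hcliso hcladd u, auxClZero cl hcliso hcladd hcu, add_zero]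
        rw [hYX, hXG, hfacG]
      · by_contra hcon
        push_neg at hcon
        have h1 : Z (cl Y) ≤ Z (cl (hnSubquot F hFm (Fin.last 0))) :=
          hssB _ Y (u ≫ isoXG.hom ≫ eTop.hom) inferInstance hY
        have h2 : Z (cl (hnSubquot F hFm (Fin.last 0))) ≤ Z (cl (cokernel u)) :=
          hssQ _ _ (eTop.inv ≫ isoXG.inv ≫ cokernel.π u) inferInstance hcu
        have hsum : cl Y + cl (cokernel u) = cl X := (auxClSeq cl hcliso hcladd u).symm
        have hYC : cl Y ∈ Clev := henv Y (cokernel u) hY hcu hsum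
        have hcC : cl (cokernel u) ∈ Clev := henv _ Y hcu hY (by rw [add_comm]; exact hsum)
        have hd : Z' (cl Y) ≤ Z' (cl (cokernel u)) := hdom _ _ hcC hYC (h1.trans h2)
        have hYCA : cl Y ∈ CA := by rw [hCA]; exact ⟨Y, hY, rfl⟩
        have hcCA : cl (cokernel u) ∈ CA := by rw [hCA]; exact ⟨_, hcu, rfl⟩
        have hXt : Z' (cl X) = t := by rw [hXG]; exact hfacG
        rcases hseesawZ' _ _ hYCA hcCA with ⟨hb1, _⟩ | ⟨hb1, _⟩
        · rw [hsum, hXt] at hb1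
          exact absurd hb1 (not_le.mpr hcon)
        · rw [hsum, hXt] at hb1
          exact absurd (hd.trans hb1) (not_le.mpr hcon)
    · -- m ≥ 1
      have hAne : A ≠ ⊥ := by
        rw [hA]
        intro hbot
        have := congrArg Fin.val (hFm.injective (hbot.trans h0.symm))
        simp at this
        exact hm0 this
      have hAnz : ¬ IsZero (A : C) := auxNeBotNonzero hAne
      have hGClev : cl (cokernel A.arrow) ∈ Clev :=
        henv _ (A : C) hGne hAnz (by rw [add_comm]; exact hclXA.symm)
      have hF'm := resFil_strictMono F hFm
      have h0' : resFil F hFm.monotone 0 = ⊥ := resFil_zero F hFm.monotone h0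
      have htop' : resFil F hFm.monotone (Fin.last m) = ⊤ := resFil_last F hFm.monotone
      have hssB' : ∀ (i : Fin m) (B : C)
          (m' : B ⟶ hnSubquot (resFil F hFm.monotone) hF'm i), Mono m' → ¬ IsZero B →
          Z (cl B) ≤ Z (cl (hnSubquot (resFil F hFm.monotone) hF'm i)) := by
        intro i B m' hm' hB
        haveI := hm'
        rw [hcliso _ _ (resFilSubquotIso F hFm i)]
        exact hssB i.castSucc B (m' ≫ (resFilSubquotIso F hFm i).hom) inferInstance hB
      have hssQ' : ∀ (i : Fin m) (B : C)
          (p' : hnSubquot (resFil F hFm.monotone) hF'm i ⟶ B), Epi p' → ¬ IsZero B →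
          Z (cl (hnSubquot (resFil F hFm.monotone) hF'm i)) ≤ Z (cl B) := by
        intro i B p' hp' hB
        haveI := hp'
        rw [hcliso _ _ (resFilSubquotIso F hFm i)]
        exact hssQ i.castSucc B ((resFilSubquotIso F hFm i).inv ≫ p') inferInstance hB
      have hfac' : ∀ i : Fin m, Z' (cl (hnSubquot (resFil F hFm.monotone) hF'm i)) = t :=
        fun i => by rw [hcliso _ _ (resFilSubquotIso F hFm i)]; exact hfac i.castSucc
      have henvA : ∀ D D' : C, ¬ IsZero D → ¬ IsZero D' → cl D + cl D' = cl (A : C) →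
          cl D ∈ Clev := by
        intro D D' hD hD' hsum
        refine henv D (D' ⊞ cokernel A.arrow) hD
          (fun hz => hD' (auxIsZeroOfMono biprod.inl hz)) ?_
        rw [auxClBiprod cl hcliso hcladd, ← add_assoc, hsum, ← hclXA]
      by_cases hcu : IsZero (cokernel u)
      · have hYX : cl Y = cl X := by
          rw [auxClSeq cl hcliso hcladd u, auxClZero cl hcliso hcladd hcu, add_zero]
        have hAle : Z' (cl (A : C)) ≤ t :=
          IH ((A : Subobject X) : C) (resFil F hFm.monotone) hF'm h0' htop' hssB' hssQ' hfac'
            henvA ((A : Subobject X) : C) (𝟙 _) inferInstance hAnz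
        have hACA : cl (A : C) ∈ CA := by rw [hCA]; exact ⟨_, hAnz, rfl⟩
        have hGCA : cl (cokernel A.arrow) ∈ CA := by rw [hCA]; exact ⟨_, hGne, rfl⟩
        rw [hYX, hclXA]
        rcases hseesawZ' _ _ hACA hGCA with ⟨_, hb⟩ | ⟨_, hb⟩
        · exact hb.trans (le_of_eq hfacG)
        · exact hb.trans hAle
      · have hdecY : cl Y = cl (kernel (u ≫ cokernel.π A.arrow)) +
            cl (Abelian.image (u ≫ cokernel.π A.arrow)) :=
          auxClSrc cl hcliso hcladd (u ≫ cokernel.π A.arrow)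
        have hXY : cl X = cl Y + cl (cokernel u) := auxClSeq cl hcliso hcladd u
        have hIb : ¬ IsZero (Abelian.image (u ≫ cokernel.π A.arrow)) →
            Z' (cl (Abelian.image (u ≫ cokernel.π A.arrow))) ≤ t := by
          intro hI
          have h1 : Z (cl (Abelian.image (u ≫ cokernel.π A.arrow))) ≤
              Z (cl (hnSubquot F hFm (Fin.last m))) :=
            hssB (Fin.last m) _ (Abelian.image.ι (u ≫ cokernel.π A.arrow) ≫ eTop.hom)
              inferInstance hI
          have hIC : cl (Abelian.image (u ≫ cokernel.π A.arrow)) ∈ Clev := by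
            refine henv _ (kernel (u ≫ cokernel.π A.arrow) ⊞ cokernel u) hI
              (fun hz => hcu (auxIsZeroOfMono biprod.inr hz)) ?_
            rw [auxClBiprod cl hcliso hcladd, hXY, hdecY]
            abel
          have hGC : cl (hnSubquot F hFm (Fin.last m)) ∈ Clev := by
            rw [← hcliso _ _ eTop]; exact hGClev
          exact (hdom _ _ hGC hIC h1).trans (le_of_eq (hfac (Fin.last m)))
        have hKb : ¬ IsZero (kernel (u ≫ cokernel.π A.arrow)) →
            Z' (cl (kernel (u ≫ cokernel.π A.arrow))) ≤ t := by
          intro hK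
          have hcomm : (kernel.ι (u ≫ cokernel.π A.arrow) ≫ u) ≫ cokernel.π A.arrow = 0 := by
            rw [Category.assoc]
            exact kernel.condition _
          have hκ : Abelian.monoLift A.arrow _ hcomm ≫ A.arrow =
              kernel.ι (u ≫ cokernel.π A.arrow) ≫ u := Abelian.monoLift_comp _ _ _
          haveI : Mono (Abelian.monoLift A.arrow _ hcomm) := mono_of_mono_fac hκ
          exact IH ((A : Subobject X) : C) (resFil F hFm.monotone) hF'm h0' htop' hssB' hssQ'
            hfac' henvA _ (Abelian.monoLift A.arrow _ hcomm) inferInstance hK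
        by_cases hK : IsZero (kernel (u ≫ cokernel.π A.arrow))
        · have hI : ¬ IsZero (Abelian.image (u ≫ cokernel.π A.arrow)) := fun hI =>
            hclne Y hY (by
              rw [hdecY, auxClZero cl hcliso hcladd hK, auxClZero cl hcliso hcladd hI, add_zero])
          rw [hdecY, auxClZero cl hcliso hcladd hK, zero_add]
          exact hIb hI
        · by_cases hI : IsZero (Abelian.image (u ≫ cokernel.π A.arrow))
          · rw [hdecY, auxClZero cl hcliso hcladd hI, add_zero]
            exact hKb hK
          · rw [hdecY]
            have hKCA : cl (kernel (u ≫ cokernel.π A.arrow)) ∈ CA := by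
              rw [hCA]; exact ⟨_, hK, rfl⟩
            have hICA : cl (Abelian.image (u ≫ cokernel.π A.arrow)) ∈ CA := by
              rw [hCA]; exact ⟨_, hI, rfl⟩
            rcases hseesawZ' _ _ hKCA hICA with ⟨_, hb⟩ | ⟨_, hb⟩
            · exact hb.trans (hIb hI)
            · exact hb.trans (hKb hK)

end MainInduction
section MainInduction2

variable {C : Type u} [Category.{v} C] [Abelian C]
variable {N : Type*} [AddCommGroup N] {T : Type*} [LinearOrder T]

lemma auxQuotBound (cl : C → N)
    (hcliso : ∀ X Y : C, (X ≅ Y) → cl X = cl Y)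
    (hcladd : ∀ (X : C) (S : Subobject X), cl X = cl (S : C) + cl (cokernel S.arrow))
    (hclne : ∀ X : C, ¬ IsZero X → cl X ≠ 0)
    (Z Z' : N → T) (CA : Set N) (hCA : CA = {w | ∃ X : C, ¬ IsZero X ∧ cl X = w})
    (Clev : Set N)
    (hseesawZ' : ∀ a b : N, a ∈ CA → b ∈ CA →
      (Z' a ≤ Z' (a + b) ∧ Z' (a + b) ≤ Z' b) ∨ (Z' b ≤ Z' (a + b) ∧ Z' (a + b) ≤ Z' a))
    (hdom : ∀ v₁ v₂ : N, v₁ ∈ Clev → v₂ ∈ Clev → Z v₂ ≤ Z v₁ → Z' v₂ ≤ Z' v₁)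
    (t : T) :
    ∀ (n : ℕ) (X : C) (F : Fin (n + 1) → Subobject X) (hFm : StrictMono F),
      F 0 = ⊥ → F (Fin.last n) = ⊤ →
      (∀ (i : Fin n) (B : C) (m' : B ⟶ hnSubquot F hFm i), Mono m' → ¬ IsZero B →
        Z (cl B) ≤ Z (cl (hnSubquot F hFm i))) →
      (∀ (i : Fin n) (B : C) (p' : hnSubquot F hFm i ⟶ B), Epi p' → ¬ IsZero B →
        Z (cl (hnSubquot F hFm i)) ≤ Z (cl B)) →
      (∀ i : Fin n, Z' (cl (hnSubquot F hFm i)) = t) →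
      (∀ D D' : C, ¬ IsZero D → ¬ IsZero D' → cl D + cl D' = cl X → cl D ∈ Clev) →
      ∀ (Y : C) (p : X ⟶ Y), Epi p → ¬ IsZero Y → t ≤ Z' (cl Y) := by
  intro n
  induction n with
  | zero =>
    intro X F hFm h0 htop _ _ _ _ Y p hp hY
    haveI := hp
    refine absurd (auxIsZeroOfEpi p (auxBotEqTopZero ?_)) hY
    rw [← h0, ← htop, Fin.last_zero]
  | succ m IH =>
    intro X F hFm h0 htop hssB hssQ hfac henv Y p hp hY
    haveI := hp
    set A : Subobject X := F (Fin.castSucc (Fin.last m)) with hA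
    have eTop : cokernel A.arrow ≅ hnSubquot F hFm (Fin.last m) := auxTopQuotIso F hFm htop
    have hGne : ¬ IsZero (cokernel A.arrow) := fun hz =>
      auxSubquotNonzero F hFm (Fin.last m) (hz.of_iso eTop.symm)
    have hclXA : cl X = cl (A : C) + cl (cokernel A.arrow) := hcladd X A
    have hfacG : Z' (cl (cokernel A.arrow)) = t := by
      rw [hcliso _ _ eTop]; exact hfac (Fin.last m)
    by_cases hm0 : m = 0
    · subst hm0
      have hAbot : A = ⊥ := h0
      have hAzero : IsZero (A : C) := auxEqBotZero hAbot
      have hclA : cl (A : C) = 0 := auxClZero cl hcliso hcladd hAzero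
      have hXG : cl X = cl (cokernel A.arrow) := by rw [hclXA, hclA, zero_add]
      have isoXG : X ≅ cokernel A.arrow :=
        (cokernelIsoOfEq (hAzero.eq_zero_of_src A.arrow) ≪≫ cokernelZeroIsoTarget).symm
      by_cases hku : IsZero (kernel p)
      · haveI := Preadditive.mono_of_isZero_kernel p hku
        haveI : IsIso p := isIso_of_mono_of_epi p
        have hYX : cl Y = cl X := (hcliso _ _ (asIso p)).symm
        rw [hYX, hXG, hfacG]
      · by_contra hcon
        push_neg at hcon
        have h1 : Z (cl (hnSubquot F hFm (Fin.last 0))) ≤ Z (cl Y) :=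
          hssQ _ Y (eTop.inv ≫ isoXG.inv ≫ p) inferInstance hY
        have h2 : Z (cl (kernel p)) ≤ Z (cl (hnSubquot F hFm (Fin.last 0))) :=
          hssB _ _ (kernel.ι p ≫ isoXG.hom ≫ eTop.hom) inferInstance hku
        have hsum : cl (kernel p) + cl Y = cl X := by
          rw [auxClSeq cl hcliso hcladd (kernel.ι p), hcliso _ _ (auxCokerKernelIso p)]
        have hYC : cl Y ∈ Clev := henv Y (kernel p) hY hku (by rw [add_comm]; exact hsum)
        have hkC : cl (kernel p) ∈ Clev := henv _ Y hku hY hsum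
        have hd : Z' (cl (kernel p)) ≤ Z' (cl Y) := hdom _ _ hYC hkC (h2.trans h1)
        have hYCA : cl Y ∈ CA := by rw [hCA]; exact ⟨Y, hY, rfl⟩
        have hkCA : cl (kernel p) ∈ CA := by rw [hCA]; exact ⟨_, hku, rfl⟩
        have hXt : Z' (cl X) = t := by rw [hXG]; exact hfacG
        rcases hseesawZ' _ _ hkCA hYCA with ⟨_, hb2⟩ | ⟨_, hb2⟩
        · rw [hsum, hXt] at hb2
          exact absurd hb2 (not_le.mpr hcon)
        · rw [hsum, hXt] at hb2
          exact absurd (hb2.trans hd) (not_le.mpr hcon)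
    · -- m ≥ 1
      have hAne : A ≠ ⊥ := by
        rw [hA]
        intro hbot
        have := congrArg Fin.val (hFm.injective (hbot.trans h0.symm))
        simp at this
        exact hm0 this
      have hAnz : ¬ IsZero (A : C) := auxNeBotNonzero hAne
      have hGClev : cl (cokernel A.arrow) ∈ Clev :=
        henv _ (A : C) hGne hAnz (by rw [add_comm]; exact hclXA.symm)
      have hGC : cl (hnSubquot F hFm (Fin.last m)) ∈ Clev := by
        rw [← hcliso _ _ eTop]; exact hGClev
      have hF'm := resFil_strictMono F hFm
      have h0' : resFil F hFm.monotone 0 = ⊥ := resFil_zero F hFm.monotone h0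
      have htop' : resFil F hFm.monotone (Fin.last m) = ⊤ := resFil_last F hFm.monotone
      have hssB' : ∀ (i : Fin m) (B : C)
          (m' : B ⟶ hnSubquot (resFil F hFm.monotone) hF'm i), Mono m' → ¬ IsZero B →
          Z (cl B) ≤ Z (cl (hnSubquot (resFil F hFm.monotone) hF'm i)) := by
        intro i B m' hm' hB
        haveI := hm'
        rw [hcliso _ _ (resFilSubquotIso F hFm i)]
        exact hssB i.castSucc B (m' ≫ (resFilSubquotIso F hFm i).hom) inferInstance hB
      have hssQ' : ∀ (i : Fin m) (B : C)
          (p' : hnSubquot (resFil F hFm.monotone) hF'm i ⟶ B), Epi p' → ¬ IsZero B →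
          Z (cl (hnSubquot (resFil F hFm.monotone) hF'm i)) ≤ Z (cl B) := by
        intro i B p' hp' hB
        haveI := hp'
        rw [hcliso _ _ (resFilSubquotIso F hFm i)]
        exact hssQ i.castSucc B ((resFilSubquotIso F hFm i).inv ≫ p') inferInstance hB
      have hfac' : ∀ i : Fin m, Z' (cl (hnSubquot (resFil F hFm.monotone) hF'm i)) = t :=
        fun i => by rw [hcliso _ _ (resFilSubquotIso F hFm i)]; exact hfac i.castSucc
      have henvA : ∀ D D' : C, ¬ IsZero D → ¬ IsZero D' → cl D + cl D' = cl (A : C) →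
          cl D ∈ Clev := by
        intro D D' hD hD' hsum
        refine henv D (D' ⊞ cokernel A.arrow) hD
          (fun hz => hD' (auxIsZeroOfMono biprod.inl hz)) ?_
        rw [auxClBiprod cl hcliso hcladd, ← add_assoc, hsum, ← hclXA]
      by_cases hku : IsZero (kernel p)
      · haveI := Preadditive.mono_of_isZero_kernel p hku
        haveI : IsIso p := isIso_of_mono_of_epi p
        have hYX : cl Y = cl X := (hcliso _ _ (asIso p)).symm
        have hAge : t ≤ Z' (cl (A : C)) :=
          IH ((A : Subobject X) : C) (resFil F hFm.monotone) hF'm h0' htop' hssB' hssQ' hfac'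
            henvA ((A : Subobject X) : C) (𝟙 _) inferInstance hAnz
        have hACA : cl (A : C) ∈ CA := by rw [hCA]; exact ⟨_, hAnz, rfl⟩
        have hGCA : cl (cokernel A.arrow) ∈ CA := by rw [hCA]; exact ⟨_, hGne, rfl⟩
        rw [hYX, hclXA]
        rcases hseesawZ' _ _ hACA hGCA with ⟨hb, _⟩ | ⟨hb, _⟩
        · exact hAge.trans hb
        · exact (le_of_eq hfacG.symm).trans hb
      · have hdecY : cl Y = cl (Abelian.image (A.arrow ≫ p)) + cl (cokernel (A.arrow ≫ p)) :=
          auxClTgt cl hcliso hcladd (A.arrow ≫ p)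
        have hXk : cl X = cl (kernel p) + cl Y := by
          rw [auxClSeq cl hcliso hcladd (kernel.ι p), hcliso _ _ (auxCokerKernelIso p)]
        have hCb : ¬ IsZero (cokernel (A.arrow ≫ p)) →
            t ≤ Z' (cl (cokernel (A.arrow ≫ p))) := by
          intro hc
          have hδ0 : A.arrow ≫ p ≫ cokernel.π (A.arrow ≫ p) = 0 := by
            rw [← Category.assoc]
            exact cokernel.condition _
          have hδcomm : cokernel.π A.arrow ≫
              cokernel.desc A.arrow (p ≫ cokernel.π (A.arrow ≫ p)) hδ0 =
              p ≫ cokernel.π (A.arrow ≫ p) := cokernel.π_desc _ _ _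
          haveI : Epi (cokernel.desc A.arrow (p ≫ cokernel.π (A.arrow ≫ p)) hδ0) :=
            epi_of_epi_fac hδcomm
          have h1 : Z (cl (hnSubquot F hFm (Fin.last m))) ≤ Z (cl (cokernel (A.arrow ≫ p))) :=
            hssQ (Fin.last m) _
              (eTop.inv ≫ cokernel.desc A.arrow (p ≫ cokernel.π (A.arrow ≫ p)) hδ0)
              inferInstance hc
          have hcC : cl (cokernel (A.arrow ≫ p)) ∈ Clev := by
            refine henv _ (kernel p ⊞ Abelian.image (A.arrow ≫ p)) hc
              (fun hz => hku (auxIsZeroOfMono biprod.inl hz)) ?_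
            rw [auxClBiprod cl hcliso hcladd, hXk, hdecY]
            abel
          exact (le_of_eq (hfac (Fin.last m)).symm).trans (hdom _ _ hcC hGC h1)
        have hIb : ¬ IsZero (Abelian.image (A.arrow ≫ p)) →
            t ≤ Z' (cl (Abelian.image (A.arrow ≫ p))) := by
          intro hI
          exact IH ((A : Subobject X) : C) (resFil F hFm.monotone) hF'm h0' htop' hssB' hssQ'
            hfac' henvA _ (Abelian.factorThruImage (A.arrow ≫ p)) inferInstance hI
        by_cases hI : IsZero (Abelian.image (A.arrow ≫ p))
        · have hc : ¬ IsZero (cokernel (A.arrow ≫ p)) := fun hc =>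
            hclne Y hY (by
              rw [hdecY, auxClZero cl hcliso hcladd hI, auxClZero cl hcliso hcladd hc, add_zero])
          rw [hdecY, auxClZero cl hcliso hcladd hI, zero_add]
          exact hCb hc
        · by_cases hc : IsZero (cokernel (A.arrow ≫ p))
          · rw [hdecY, auxClZero cl hcliso hcladd hc, add_zero]
            exact hIb hI
          · rw [hdecY]
            have hICA : cl (Abelian.image (A.arrow ≫ p)) ∈ CA := by
              rw [hCA]; exact ⟨_, hI, rfl⟩
            have hcCA : cl (cokernel (A.arrow ≫ p)) ∈ CA := by
              rw [hCA]; exact ⟨_, hc, rfl⟩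
            rcases hseesawZ' _ _ hICA hcCA with ⟨hb, _⟩ | ⟨hb, _⟩
            · exact (hIb hI).trans hb
            · exact (hCb hc).trans hb

end MainInduction2
/-- Let `cl` be an additive class map from an abelian category to an abelian group `N`,
with positive cone `CA` (classes of nonzero objects), and let `Z, Z' : N → T` be weak
stability functions admitting Harder–Narasimhan filtrations. If `Z'` dominates `Z` with
respect to `v` (on `C_{≤v}`, `Z`-inequalities imply `Z'`-inequalities), then an object
`E` with `cl E = v` is `Z'`-semistable iff the `Z`-Harder–Narasimhan factors
`F₁, …, F_l` of `E` satisfy `Z'(F₁) = ⋯ = Z'(F_l)`. -/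
theorem stmt_10 {C : Type u} [Category.{v} C] [Abelian C]
    {N : Type*} [AddCommGroup N] {T : Type*} [LinearOrder T]
    (cl : C → N)
    -- the class map is constant on isomorphism classes
    (hcliso : ∀ X Y : C, (X ≅ Y) → cl X = cl Y)
    -- the class map is additive on short exact sequences
    (hcladd : ∀ (X : C) (S : Subobject X), cl X = cl (S : C) + cl (cokernel S.arrow))
    -- classes of nonzero objects are nonzero
    (hclne : ∀ X : C, ¬ IsZero X → cl X ≠ 0)
    (Z Z' : N → T)
    -- the positive cone C(A) and the subcone C_{≤ v}(A)
    (CA : Set N) (hCA : CA = {w | ∃ X : C, ¬ IsZero X ∧ cl X = w})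
    (v : N)
    (Clev : Set N) (hClev : Clev = {w ∈ CA | ∃ w' ∈ CA, w + w' = v})
    -- see-saw property of Z and Z' on the positive cone
    (hseesawZ : ∀ a b : N, a ∈ CA → b ∈ CA →
      (Z a ≤ Z (a + b) ∧ Z (a + b) ≤ Z b) ∨ (Z b ≤ Z (a + b) ∧ Z (a + b) ≤ Z a))
    (hseesawZ' : ∀ a b : N, a ∈ CA → b ∈ CA →
      (Z' a ≤ Z' (a + b) ∧ Z' (a + b) ≤ Z' b) ∨ (Z' b ≤ Z' (a + b) ∧ Z' (a + b) ≤ Z' a))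
    -- Z' dominates Z with respect to v
    (hdom : ∀ v₁ v₂ : N, v₁ ∈ Clev → v₂ ∈ Clev → Z v₂ ≤ Z v₁ → Z' v₂ ≤ Z' v₁)
    -- semistability predicates with respect to Z and Z'
    (ssZ ssZ' : C → Prop)
    (hssZ : ∀ X : C, ssZ X ↔
      ∀ S : Subobject X, S ≠ ⊥ → S ≠ ⊤ → Z (cl (S : C)) ≤ Z (cl (cokernel S.arrow)))
    (hssZ' : ∀ X : C, ssZ' X ↔
      ∀ S : Subobject X, S ≠ ⊥ → S ≠ ⊤ → Z' (cl (S : C)) ≤ Z' (cl (cokernel S.arrow)))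
    -- an object E of class v, together with its Z-Harder–Narasimhan filtration
    (E : C) (hE : ¬ IsZero E) (hEv : cl E = v)
    (n : ℕ) (F : Fin (n + 1) → Subobject E) (hFmono : StrictMono F)
    (hF0 : F 0 = ⊥) (hFtop : F (Fin.last n) = ⊤)
    (hssF : ∀ i : Fin n, ssZ (hnSubquot F hFmono i))
    (hdec : ∀ i j : Fin n, i < j →
      Z (cl (hnSubquot F hFmono j)) < Z (cl (hnSubquot F hFmono i))) :
    ssZ' E ↔ ∀ i j : Fin n,
      Z' (cl (hnSubquot F hFmono i)) = Z' (cl (hnSubquot F hFmono j)) := by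
  cases n with
  | zero =>
    refine absurd (auxBotEqTopZero ?_) hE
    rw [← hF0, ← hFtop, Fin.last_zero]
  | succ m =>
    constructor
    · -- forward direction
      intro hs
      have hwCA : ∀ i : Fin (m + 1), cl (hnSubquot F hFmono i) ∈ CA := fun i => by
        rw [hCA]; exact ⟨_, auxSubquotNonzero F hFmono i, rfl⟩
      have hsum_i : ∀ i : Fin (m + 1), cl (hnSubquot F hFmono i) +
          cl (((F i.castSucc : Subobject E) : C) ⊞ cokernel (F i.succ).arrow) = v := by
        intro i
        rw [auxClBiprod cl hcliso hcladd, ← hEv, hcladd E (F i.succ),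
          auxClStep cl hcliso hcladd F hFmono i]
        abel
      have hwClev : ∀ i : Fin (m + 1), 1 ≤ m → cl (hnSubquot F hFmono i) ∈ Clev := by
        intro i hm
        rw [hClev]
        refine ⟨hwCA i, cl (((F i.castSucc : Subobject E) : C) ⊞ cokernel (F i.succ).arrow),
          ?_, hsum_i i⟩
        rw [hCA]
        refine ⟨_, ?_, rfl⟩
        by_cases h0i : (i : ℕ) = 0
        · have hne : F i.succ ≠ ⊤ := by
            rw [← hFtop]
            intro hEq
            have := congrArg Fin.val (hFmono.injective hEq)
            simp at this
            omega
          exact fun hz => auxNeTopCoker hne (auxIsZeroOfMono biprod.inr hz)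
        · have hne : F i.castSucc ≠ ⊥ := by
            rw [← hF0]
            intro hEq
            have := congrArg Fin.val (hFmono.injective hEq)
            simp at this
            exact h0i (by simp [this])
          exact fun hz => auxNeBotNonzero hne (auxIsZeroOfMono biprod.inl hz)
      have anti : ∀ i j : Fin (m + 1), i < j →
          Z' (cl (hnSubquot F hFmono j)) ≤ Z' (cl (hnSubquot F hFmono i)) := by
        intro i j hij
        have hij' : (i : ℕ) < j := hij
        have hj := j.isLt
        have hm : 1 ≤ m := by omega
        exact hdom _ _ (hwClev i hm) (hwClev j hm) (hdec i j hij).le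
      have claim3 : ∀ (k : ℕ) (hk : k < m + 1),
          Z' (cl (hnSubquot F hFmono ⟨k, hk⟩)) ≤
            Z' (cl ((F (⟨k, hk⟩ : Fin (m + 1)).succ : Subobject E) : C)) := by
        intro k
        induction k with
        | zero =>
          intro hk
          have h00 : cl ((F (⟨0, hk⟩ : Fin (m + 1)).castSucc : Subobject E) : C) = 0 :=
            auxClZero cl hcliso hcladd (auxEqBotZero (show
              F (⟨0, hk⟩ : Fin (m + 1)).castSucc = ⊥ by
                rw [show (⟨0, hk⟩ : Fin (m + 1)).castSucc = 0 from Fin.ext (by simp), hF0]))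
          rw [auxClStep cl hcliso hcladd F hFmono ⟨0, hk⟩, h00, zero_add]
        | succ k ih =>
          intro hk
          have hk' : k < m + 1 := by omega
          have hlt : (⟨k, hk'⟩ : Fin (m + 1)) < ⟨k + 1, hk⟩ := by simp [Fin.lt_def]
          have h1 : Z' (cl (hnSubquot F hFmono ⟨k + 1, hk⟩)) ≤
              Z' (cl ((F (⟨k + 1, hk⟩ : Fin (m + 1)).castSucc : Subobject E) : C)) :=
            (anti _ _ hlt).trans (ih hk')
          rw [auxClStep cl hcliso hcladd F hFmono ⟨k + 1, hk⟩]
          have haCA : cl ((F (⟨k + 1, hk⟩ : Fin (m + 1)).castSucc : Subobject E) : C) ∈ CA := by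
            rw [hCA]
            refine ⟨_, auxNeBotNonzero (show F (⟨k + 1, hk⟩ : Fin (m + 1)).castSucc ≠ ⊥
              from ?_), rfl⟩
            rw [← hF0]
            intro hEq
            have := congrArg Fin.val (hFmono.injective hEq)
            simp at this
          have hbCA := hwCA ⟨k + 1, hk⟩
          have hmin := auxSeesawMin hseesawZ' haCA hbCA
          exact le_trans (le_of_eq (min_eq_right h1).symm) hmin
      have claim4 : ∀ (d k : ℕ) (hdk : k + d = m),
          Z' (cl (cokernel (F (⟨k, by omega⟩ : Fin (m + 1)).castSucc).arrow)) ≤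
            Z' (cl (hnSubquot F hFmono ⟨k, by omega⟩)) := by
        intro d
        induction d with
        | zero =>
          intro k hdk
          have hkm : k = m := by omega
          subst hkm
          exact le_of_eq (congrArg Z' (hcliso _ _ (auxTopQuotIso F hFmono hFtop)))
        | succ d ihd =>
          intro k hdk
          have hk : k < m + 1 := by omega
          have hk1 : k + 1 < m + 1 := by omega
          have e1 := hcladd E (F (⟨k, hk⟩ : Fin (m + 1)).castSucc)
          have e2 : cl E = cl ((F (⟨k + 1, hk1⟩ : Fin (m + 1)).castSucc : Subobject E) : C) +
              cl (cokernel (F (⟨k + 1, hk1⟩ : Fin (m + 1)).castSucc).arrow) := hcladd E _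
          have e3 : cl ((F (⟨k + 1, hk1⟩ : Fin (m + 1)).castSucc : Subobject E) : C) =
              cl ((F (⟨k, hk⟩ : Fin (m + 1)).castSucc : Subobject E) : C) +
              cl (hnSubquot F hFmono ⟨k, hk⟩) :=
            auxClStep cl hcliso hcladd F hFmono ⟨k, hk⟩
          have hrel : cl (cokernel (F (⟨k, hk⟩ : Fin (m + 1)).castSucc).arrow) =
              cl (hnSubquot F hFmono ⟨k, hk⟩) +
              cl (cokernel (F (⟨k + 1, hk1⟩ : Fin (m + 1)).castSucc).arrow) := by
            have h12 := e1.symm.trans e2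
            rw [e3, add_assoc] at h12
            exact add_left_cancel h12
          rw [hrel]
          have hih := ihd (k + 1) (by omega)
          have hanti : Z' (cl (hnSubquot F hFmono ⟨k + 1, hk1⟩)) ≤
              Z' (cl (hnSubquot F hFmono ⟨k, hk⟩)) := anti _ _ (by simp [Fin.lt_def])
          have h2 : Z' (cl (cokernel (F (⟨k + 1, hk1⟩ : Fin (m + 1)).castSucc).arrow)) ≤
              Z' (cl (hnSubquot F hFmono ⟨k, hk⟩)) := hih.trans hanti
          have hbCA : cl (cokernel (F (⟨k + 1, hk1⟩ : Fin (m + 1)).castSucc).arrow) ∈ CA := by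
            rw [hCA]
            refine ⟨_, auxNeTopCoker ?_, rfl⟩
            rw [← hFtop]
            intro hEq
            have := congrArg Fin.val (hFmono.injective hEq)
            simp at this
            omega
          have haCA := hwCA ⟨k, hk⟩
          have hmax := auxSeesawMax hseesawZ' haCA hbCA
          exact hmax.trans (max_le le_rfl h2)
      have adj : ∀ (k : ℕ) (h1 : k + 1 < m + 1),
          Z' (cl (hnSubquot F hFmono ⟨k + 1, h1⟩)) =
            Z' (cl (hnSubquot F hFmono ⟨k, by omega⟩)) := by
        intro k h1
        refine le_antisymm (anti _ _ (by simp [Fin.lt_def])) ?_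
        have hSb : F (⟨k + 1, h1⟩ : Fin (m + 1)).castSucc ≠ ⊥ := by
          rw [← hF0]
          intro hEq
          have := congrArg Fin.val (hFmono.injective hEq)
          simp at this
        have hSt : F (⟨k + 1, h1⟩ : Fin (m + 1)).castSucc ≠ ⊤ := by
          rw [← hFtop]
          intro hEq
          have := congrArg Fin.val (hFmono.injective hEq)
          simp at this
          omega
        have hss := (hssZ' E).mp hs _ hSb hSt
        have hc3 : Z' (cl (hnSubquot F hFmono ⟨k, by omega⟩)) ≤
            Z' (cl ((F (⟨k + 1, h1⟩ : Fin (m + 1)).castSucc : Subobject E) : C)) :=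
          claim3 k (by omega)
        have hc4 : Z' (cl (cokernel (F (⟨k + 1, h1⟩ : Fin (m + 1)).castSucc).arrow)) ≤
            Z' (cl (hnSubquot F hFmono ⟨k + 1, h1⟩)) := claim4 (m - (k + 1)) (k + 1) (by omega)
        exact hc3.trans (hss.trans hc4)
      have hzero : ∀ (k : ℕ) (hk : k < m + 1),
          Z' (cl (hnSubquot F hFmono ⟨k, hk⟩)) =
            Z' (cl (hnSubquot F hFmono ⟨0, Nat.succ_pos m⟩)) := by
        intro k
        induction k with
        | zero => intro hk; rfl
        | succ k ih =>
          intro hk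
          rw [adj k hk]
          exact ih (by omega)
      intro i j
      have hi := hzero i.val i.isLt
      have hj := hzero j.val j.isLt
      exact hi.trans hj.symm
    · -- backward direction
      intro hfacEq
      rw [hssZ' E]
      intro S hSb hSt
      have hssB : ∀ (i : Fin (m + 1)) (B : C) (m' : B ⟶ hnSubquot F hFmono i),
          Mono m' → ¬ IsZero B → Z (cl B) ≤ Z (cl (hnSubquot F hFmono i)) := by
        intro i B m' hm' hB
        haveI := hm'
        exact auxMonoBound cl hcliso hcladd Z hCA hseesawZ ((hssZ _).mp (hssF i)) m' hB
      have hssQ : ∀ (i : Fin (m + 1)) (B : C) (p' : hnSubquot F hFmono i ⟶ B),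
          Epi p' → ¬ IsZero B → Z (cl (hnSubquot F hFmono i)) ≤ Z (cl B) := by
        intro i B p' hp' hB
        haveI := hp'
        exact auxEpiBound cl hcliso hcladd Z hCA hseesawZ ((hssZ _).mp (hssF i)) p' hB
      have henvE : ∀ D D' : C, ¬ IsZero D → ¬ IsZero D' → cl D + cl D' = cl E →
          cl D ∈ Clev := by
        intro D D' hD hD' hsum
        rw [hClev]
        exact ⟨by rw [hCA]; exact ⟨D, hD, rfl⟩, cl D',
          by rw [hCA]; exact ⟨D', hD', rfl⟩, by rw [← hEv]; exact hsum⟩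
      have h1 : Z' (cl ((S : Subobject E) : C)) ≤
          Z' (cl (hnSubquot F hFmono (Fin.last m))) :=
        auxSubBound cl hcliso hcladd hclne Z Z' CA hCA Clev hseesawZ' hdom
          (Z' (cl (hnSubquot F hFmono (Fin.last m)))) (m + 1) E F hFmono hF0 hFtop hssB hssQ
          (fun i => hfacEq i (Fin.last m)) henvE ((S : Subobject E) : C) S.arrow
          inferInstance (auxNeBotNonzero hSb)
      have h2 : Z' (cl (hnSubquot F hFmono (Fin.last m))) ≤ Z' (cl (cokernel S.arrow)) :=
        auxQuotBound cl hcliso hcladd hclne Z Z' CA hCA Clev hseesawZ' hdom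
          (Z' (cl (hnSubquot F hFmono (Fin.last m)))) (m + 1) E F hFmono hF0 hFtop hssB hssQ
          (fun i => hfacEq i (Fin.last m)) henvE (cokernel S.arrow) (cokernel.π S.arrow)
          inferInstance (auxNeTopCoker hSt)
      exact h1.trans h2
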